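/- arXiv:0811.1525 — 6 statements merged into one kernel-verified Lean document; each statement's English description precedes it below -/
import Mathlib

section
/- For the planar point set P = {(0,z) : z ∈ ℤ} ∪ {(1,0)}, every point q ∈ P \ {(1,0)} is Voronoi relevant for a = (1,0); consequently the Voronoi cell V(a) is not a polyhedron (it is not the intersection of finitely many closed half-spaces). -/
open scoped RealInnerProductSpace
open Set

noncomputable section

abbrev E (n : ℕ) := EuclideanSpace ℝ (Fin n)

/-- `P` is discrete: every bounded set contains only finitely many points of `P`. -/
def IsDiscreteP {n : ℕ} (P : Set (E n)) : Prop :=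
  ∀ B : Set (E n), Bornology.IsBounded B → (P ∩ B).Finite

/-- The Voronoi cell of `p` relative to `P`. -/
def voronoiCell {n : ℕ} (P : Set (E n)) (p : E n) : Set (E n) :=
  {x | ∀ q ∈ P, dist x p ≤ dist x q}

/-- A polyhedron: a finite intersection of closed half-spaces. -/
def IsPolyhedron {n : ℕ} (S : Set (E n)) : Prop :=
  ∃ (k : ℕ) (y : Fin k → E n) (α : Fin k → ℝ),
    S = ⋂ i, {x : E n | (inner ℝ x (y i) : ℝ) ≤ α i}

/-- A polytope: a bounded polyhedron. -/
def IsPolytope {n : ℕ} (S : Set (E n)) : Prop :=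
  IsPolyhedron S ∧ Bornology.IsBounded S

/-- The half-space of points at least as close to `p` as to `q`. -/
def halfSpace {n : ℕ} (p q : E n) : Set (E n) :=
  {x : E n | (inner ℝ (x - p) (q - p) : ℝ) ≤ (1/2) * ‖q - p‖^2}

/-- The conic hull: all nonnegative combinations of finitely many elements of `M`. -/
def coneHull {n : ℕ} (M : Set (E n)) : Set (E n) :=
  {x | ∃ (k : ℕ) (v : Fin k → E n) (c : Fin k → ℝ),
    (∀ i, v i ∈ M) ∧ (∀ i, 0 ≤ c i) ∧ x = ∑ i, c i • v i}

/-- The direction cone of `p`: the conic hull of `P - p`. -/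
def dirCone {n : ℕ} (P : Set (E n)) (p : E n) : Set (E n) :=
  coneHull ((fun q => q - p) '' P)

/-- A cone is finitely generated if it is the conic hull of finitely many vectors. -/
def FinitelyGeneratedCone {n : ℕ} (C : Set (E n)) : Prop :=
  ∃ (k : ℕ) (v : Fin k → E n), C = coneHull (Set.range v)

/-- `q` is Voronoi relevant for `p`: dropping `halfSpace p q` strictly enlarges the
intersection defining the Voronoi cell. -/
def VoronoiRelevant {n : ℕ} (P : Set (E n)) (p q : E n) : Prop :=
  (⋂ r ∈ P \ {p}, halfSpace p r) ⊂ ⋂ r ∈ P \ {p, q}, halfSpace p r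

/-- The point `(x, y)` in the Euclidean plane. -/
def e2 (x y : ℝ) : E 2 := (WithLp.equiv 2 (Fin 2 → ℝ)).symm ![x, y]

/-!
Writing `x = (s, t)`, the point `x` is at least as close to `(1, 0)` as to `(0, w)` iff
`t² + 1 ≤ 2s + (t - w)²`. Hence the points `b z = (z²/2 + 1/2, z)` lie in the cell while the points
`u z = (z²/2 + 1/4, z)` violate only the constraint coming from `(0, z)`; the latter makes every
`(0, z)` relevant. If the cell were cut out by finitely many half-planes, one of them would exclude
infinitely many of the `u z` while containing the corresponding `b z = u z + (1/4, 0)`, so its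
normal has negative first coordinate; but such a half-plane contains all but finitely many points
of the parabola `z ↦ u z`.
-/

lemma mem_halfSpace_iff_dist_le {n : ℕ} (p q x : E n) :
    x ∈ halfSpace p q ↔ dist x p ≤ dist x q := by
  have hxq : x - q = (x - p) - (q - p) := by abel
  rw [halfSpace, Set.mem_ofPred_eq, dist_eq_norm, dist_eq_norm,
    ← pow_le_pow_iff_left₀ (norm_nonneg _) (norm_nonneg _) two_ne_zero, hxq,
    norm_sub_sq_real (x - p) (q - p)]
  constructor <;> intro h <;> linarith

lemma voronoiRelevant_of_dist_lt {n : ℕ} {P : Set (E n)} {p q x : E n}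
    (hqP : q ∈ P) (hqp : q ≠ p) (hother : ∀ r ∈ P \ {p, q}, dist x p ≤ dist x r)
    (hq : dist x q < dist x p) :
    VoronoiRelevant P p q := by
  refine (Set.ssubset_iff_of_subset ?_).2 ⟨x, ?_, ?_⟩
  · exact Set.biInter_subset_biInter_left (Set.sdiff_subset_sdiff_right (by simp))
  · simpa only [Set.mem_iInter₂, mem_halfSpace_iff_dist_le] using hother
  · simp only [Set.mem_iInter₂, mem_halfSpace_iff_dist_le, not_forall, not_le]
    exact ⟨q, ⟨hqP, hqp⟩, hq⟩

lemma IsPolyhedron.exists_halfSpace_infinite_outside {n : ℕ} {S : Set (E n)}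
    (hS : IsPolyhedron S) {ι : Type*} [Infinite ι] {u : ι → E n} (hu : ∀ j, u j ∉ S) :
    ∃ (y : E n) (α : ℝ), (∀ x ∈ S, ⟪x, y⟫ ≤ α) ∧ {j | α < ⟪u j, y⟫}.Infinite := by
  obtain ⟨k, y, α, rfl⟩ := hS
  have hviolated : ∀ j, ∃ i, α i < ⟪u j, y i⟫ := fun j => by
    simpa only [Set.mem_iInter, Set.mem_ofPred_eq, not_forall, not_le] using hu j
  choose g hg using hviolated
  obtain ⟨i, hi⟩ := Finite.exists_infinite_fiber g
  refine ⟨y i, α i, fun x hx => Set.mem_iInter.1 hx i, ?_⟩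
  refine (Set.infinite_coe_iff.1 hi).mono fun j hj => ?_
  simpa [show g j = i from hj] using hg j

lemma finite_setOf_lt_quadratic {a : ℝ} (ha : a < 0) (b α : ℝ) :
    {z : ℤ | α < a * z ^ 2 + b * z}.Finite := by
  set M := 1 + (|b| + |α|) / (-a)
  refine (Set.finite_Icc (-⌈M⌉) ⌈M⌉).subset fun z hz => ?_
  have hzM : |(z : ℝ)| ≤ M := by
    by_contra! hM
    have hfrac : (|b| + |α|) / (-a) < |(z : ℝ)| - 1 := by simp only [M] at hM; linarith
    have h1 : 1 < |(z : ℝ)| := by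
      linarith [div_nonneg (add_nonneg (abs_nonneg b) (abs_nonneg α)) (neg_nonneg.2 ha.le)]
    have h2 : |b| + |α| < -a * |(z : ℝ)| := by
      rw [div_lt_iff₀ (neg_pos.2 ha)] at hfrac
      nlinarith
    replace hz : α < a * z ^ 2 + b * z := hz
    have hbz : b * z ≤ |b| * |(z : ℝ)| := (le_abs_self _).trans (abs_mul b z).le
    nlinarith [sq_abs (z : ℝ), neg_abs_le α, abs_nonneg α, abs_nonneg b]
  rw [Set.mem_Icc, ← abs_le]
  exact_mod_cast hzM.trans (Int.le_ceil M)

lemma dist_e2_sq (s t s' t' : ℝ) : dist (e2 s t) (e2 s' t') ^ 2 = (s - s') ^ 2 + (t - t') ^ 2 := by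
  rw [EuclideanSpace.dist_eq, Real.sq_sqrt (by positivity), Fin.sum_univ_two]
  simp [e2, Real.dist_eq, sq_abs]

lemma inner_e2 (s t : ℝ) (y : E 2) : ⟪e2 s t, y⟫ = s * y 0 + t * y 1 := by
  simp [e2, PiLp.inner_apply, Fin.sum_univ_two, mul_comm]

lemma dist_e2_le_iff (s t w : ℝ) :
    dist (e2 s t) (e2 1 0) ≤ dist (e2 s t) (e2 0 w) ↔ t ^ 2 + 1 ≤ 2 * s + (t - w) ^ 2 := by
  rw [← pow_le_pow_iff_left₀ dist_nonneg dist_nonneg two_ne_zero, dist_e2_sq, dist_e2_sq]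
  constructor <;> intro h <;> nlinarith

def axisPoints : Set (E 2) := {x | ∃ z : ℤ, x = e2 0 z} ∪ {e2 1 0}

lemma mem_voronoiCell_axisPoints_iff (s t : ℝ) :
    e2 s t ∈ voronoiCell axisPoints (e2 1 0) ↔ ∀ w : ℤ, t ^ 2 + 1 ≤ 2 * s + (t - w) ^ 2 := by
  simp only [voronoiCell, axisPoints, Set.mem_union, Set.mem_ofPred_eq, Set.mem_singleton_iff,
    or_imp, forall_and, forall_eq, le_refl, and_true, forall_exists_index]
  rw [forall_comm]
  simp only [forall_eq, dist_e2_le_iff]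

theorem voronoiRelevant_axisPoints {q : E 2} (hq : q ∈ axisPoints \ {e2 1 0}) :
    VoronoiRelevant axisPoints (e2 1 0) q := by
  obtain ⟨⟨z, rfl⟩ | hqa, hqa'⟩ := hq
  · refine voronoiRelevant_of_dist_lt (x := e2 (z ^ 2 / 2 + 1 / 4) z) (Or.inl ⟨z, rfl⟩) hqa' ?_ ?_
    · rintro r ⟨⟨w, rfl⟩ | hr, hr'⟩
      · have hwz : z - w ≠ 0 := fun h => hr' (by simp [sub_eq_zero.1 h])
        have hsep : (1 : ℤ) ≤ (z - w) ^ 2 := by nlinarith [Int.one_le_abs hwz, sq_abs (z - w)]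
        have hsep' : (1 : ℝ) ≤ ((z : ℝ) - w) ^ 2 := by exact_mod_cast hsep
        rw [dist_e2_le_iff]
        nlinarith
      · rw [Set.mem_singleton_iff.1 hr]
    · rw [← not_le, dist_e2_le_iff]
      intro h
      linarith
  · exact absurd hqa hqa'

theorem not_isPolyhedron_voronoiCell_axisPoints :
    ¬ IsPolyhedron (voronoiCell axisPoints (e2 1 0)) := by
  intro hpoly
  have hin : ∀ z : ℤ, e2 (z ^ 2 / 2 + 1 / 2) z ∈ voronoiCell axisPoints (e2 1 0) := fun z =>
    (mem_voronoiCell_axisPoints_iff _ _).2 fun w => by nlinarith [sq_nonneg ((z : ℝ) - w)]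
  have hout : ∀ z : ℤ, e2 (z ^ 2 / 2 + 1 / 4) z ∉ voronoiCell axisPoints (e2 1 0) := fun z hz => by
    have := (mem_voronoiCell_axisPoints_iff _ _).1 hz z
    linarith
  obtain ⟨y, α, hcell, hinf⟩ := hpoly.exists_halfSpace_infinite_outside hout
  have hy : y 0 < 0 := by
    obtain ⟨z, hz⟩ := hinf.nonempty
    have hbz := hcell _ (hin z)
    simp only [Set.mem_ofPred_eq, inner_e2] at hz hbz
    linarith
  have hfin := finite_setOf_lt_quadratic (div_neg_of_neg_of_pos hy two_pos) (y 1) (α - y 0 / 4)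
  refine hinf (hfin.subset fun z hz => ?_)
  simp only [Set.mem_ofPred_eq, inner_e2] at hz ⊢
  linarith

theorem stmt0 :
    (∀ q ∈ (({x | ∃ z : ℤ, x = e2 0 z} ∪ {e2 1 0}) : Set (E 2)) \ {e2 1 0},
      VoronoiRelevant ({x | ∃ z : ℤ, x = e2 0 z} ∪ {e2 1 0}) (e2 1 0) q) ∧
    ¬ IsPolyhedron (voronoiCell ({x | ∃ z : ℤ, x = e2 0 z} ∪ {e2 1 0}) (e2 1 0)) :=
  ⟨fun _ => voronoiRelevant_axisPoints, not_isPolyhedron_voronoiCell_axisPoints⟩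
end
end

section
/- Let P ⊆ ℝⁿ be a discrete point set and p ∈ P an inner point, i.e. p lies in the interior of conv(P). Then the Voronoi cell V(p) is a polytope. -/
open scoped RealInnerProductSpace
open Set

noncomputable section

/-- `P` is discrete: every bounded set contains only finitely many points of `P`. -/
def IsDiscretePointSet {n : ℕ} (P : Set (E n)) : Prop :=
  ∀ B : Set (E n), Bornology.IsBounded B → (P ∩ B).Finite

/-!
Since `p` is interior to `conv P`, compactness of the unit sphere yields finitely many
`q ∈ P` such that every direction `v` makes an angle bounded away from `π / 2` with some
`q - p`; the bisector half-spaces of these finitely many points already cut out a bounded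
region, say inside the ball of radius `R` about `p`. A point `q` farther than `2R` from `p`
then imposes no constraint on that ball, so by discreteness `V(p)` is the intersection of
the finitely many bisector half-spaces of the points of `P` within distance `2R`.
-/

open Metric

section InnerProductSpace

variable {V : Type*} [NormedAddCommGroup V] [InnerProductSpace ℝ V]

lemma exists_inner_le_inner_sub_of_add_mem_convexHull {P : Set V} {p v : V} (u : V)
    (hv : p + v ∈ convexHull ℝ P) : ∃ q ∈ P, ⟪u, v⟫ ≤ ⟪u, q - p⟫ := by
  obtain ⟨q, hq, hle⟩ :=
    ((innerₛₗ ℝ u).convexOn convex_univ).exists_ge_of_mem_convexHull (subset_univ P) hv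
  refine ⟨q, hq, ?_⟩
  simp only [innerₛₗ_apply_apply, inner_add_right] at hle
  rw [inner_sub_right]
  linarith

lemma exists_finite_subset_inner_ge_of_mem_interior_convexHull [ProperSpace V] {P : Set V}
    {p : V} (hin : p ∈ interior (convexHull ℝ P)) :
    ∃ c > 0, ∃ F ⊆ P, F.Finite ∧ ∀ v ≠ 0, ∃ q ∈ F, c * ‖v‖ ≤ ⟪v, q - p⟫ := by
  obtain ⟨ε, hε, hball⟩ := Metric.mem_nhds_iff.1 (mem_interior_iff_mem_nhds.1 hin)
  have hcover : sphere (0 : V) 1 ⊆ ⋃ q ∈ P, {u | ε / 4 < ⟪u, q - p⟫} := by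
    intro u hu
    have hu1 : ‖u‖ = 1 := mem_sphere_zero_iff_norm.1 hu
    have hmem : p + (ε / 2) • u ∈ convexHull ℝ P :=
      hball (by
        rw [mem_ball, dist_self_add_left, norm_smul, Real.norm_of_nonneg (by positivity), hu1,
          mul_one]
        linarith)
    obtain ⟨q, hq, hle⟩ := exists_inner_le_inner_sub_of_add_mem_convexHull u hmem
    rw [real_inner_smul_right, real_inner_self_eq_norm_sq, hu1] at hle
    exact mem_biUnion hq (show ε / 4 < _ by linarith)
  obtain ⟨F, hFP, hFfin, hF⟩ := (isCompact_sphere (0 : V) 1).elim_finite_subcover_image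
    (fun q _ => isOpen_lt continuous_const (by fun_prop)) hcover
  refine ⟨ε / 4, by positivity, F, hFP, hFfin, fun v hv => ?_⟩
  have hnv : 0 < ‖v‖ := norm_pos_iff.2 hv
  obtain ⟨q, hq, hlt⟩ :=
    mem_iUnion₂.1 (hF (show ‖v‖⁻¹ • v ∈ sphere (0 : V) 1 by simp [norm_smul, hnv.ne']))
  refine ⟨q, hq, ?_⟩
  rw [mem_ofPred_eq, real_inner_smul_left, lt_inv_mul_iff₀ hnv] at hlt
  linarith

end InnerProductSpace

section Voronoi

variable {n : ℕ}

lemma mem_halfSpace_iff {p q x : E n} : x ∈ halfSpace p q ↔ dist x p ≤ dist x q := by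
  have hexp : ‖x - q‖ ^ 2 = ‖x - p‖ ^ 2 - 2 * ⟪x - p, q - p⟫ + ‖q - p‖ ^ 2 := by
    rw [← norm_sub_sq_real, sub_sub_sub_cancel_right]
  rw [dist_eq_norm, dist_eq_norm, ← sq_le_sq₀ (norm_nonneg _) (norm_nonneg _), hexp,
    halfSpace, mem_ofPred_eq]
  constructor <;> intro h <;> linarith

lemma halfSpace_eq (p q : E n) :
    halfSpace p q = {x | ⟪x, q - p⟫ ≤ 1 / 2 * ‖q - p‖ ^ 2 + ⟪p, q - p⟫} := by
  simp only [halfSpace, inner_sub_left, sub_le_iff_le_add]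

lemma isPolyhedron_iInter {ι : Type*} [Finite ι] (y : ι → E n) (α : ι → ℝ) :
    IsPolyhedron (⋂ i, {x : E n | ⟪x, y i⟫ ≤ α i}) := by
  obtain ⟨k, ⟨e⟩⟩ := Finite.exists_equiv_fin ι
  exact ⟨k, y ∘ e.symm, α ∘ e.symm,
    (e.symm.surjective.iInter_comp fun i => {x : E n | ⟪x, y i⟫ ≤ α i}).symm⟩

lemma Set.Finite.isPolyhedron_biInter_halfSpace {S : Set (E n)} (hS : S.Finite) (p : E n) :
    IsPolyhedron (⋂ q ∈ S, halfSpace p q) := by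
  have := hS.to_subtype
  simp only [biInter_eq_iInter, halfSpace_eq]
  exact isPolyhedron_iInter _ _

lemma isBounded_biInter_halfSpace {F : Set (E n)} {p : E n} {c : ℝ} (hc : 0 < c)
    (hF : F.Finite) (hdir : ∀ v ≠ 0, ∃ q ∈ F, c * ‖v‖ ≤ ⟪v, q - p⟫) :
    Bornology.IsBounded (⋂ q ∈ F, halfSpace p q) := by
  obtain ⟨M, hM⟩ := (hF.image fun q => ‖q - p‖).bddAbove
  refine (isBounded_iff_subset_closedBall p).2 ⟨M ^ 2 / (2 * c), fun x hx => ?_⟩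
  rw [mem_closedBall, dist_eq_norm, le_div_iff₀ (by positivity)]
  rcases eq_or_ne (x - p) 0 with h | h
  · rw [h, norm_zero, zero_mul]
    positivity
  obtain ⟨q, hq, hle⟩ := hdir _ h
  have hhalf : ⟪x - p, q - p⟫ ≤ 1 / 2 * ‖q - p‖ ^ 2 := mem_iInter₂.1 hx q hq
  have hqM : ‖q - p‖ ^ 2 ≤ M ^ 2 := pow_le_pow_left₀ (norm_nonneg _) (hM (mem_image_of_mem _ hq)) 2
  linarith

lemma voronoiCell_eq_biInter_halfSpace {P S : Set (E n)} {p : E n} {R : ℝ}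
    (hSP : S ⊆ P) (hPS : P ∩ closedBall p (2 * R) ⊆ S)
    (hR : ⋂ q ∈ S, halfSpace p q ⊆ closedBall p R) :
    voronoiCell P p = ⋂ q ∈ S, halfSpace p q := by
  refine Subset.antisymm
    (fun x hx => mem_iInter₂.2 fun q hq => mem_halfSpace_iff.2 (hx q (hSP hq)))
    fun x hx q hq => ?_
  by_cases hqR : q ∈ closedBall p (2 * R)
  · exact mem_halfSpace_iff.1 (mem_iInter₂.1 hx q (hPS ⟨hq, hqR⟩))
  rw [← mem_halfSpace_iff, halfSpace, mem_ofPred_eq]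
  have hxR : ‖x - p‖ ≤ R := by simpa [dist_eq_norm] using hR hx
  have hqR' : 2 * R < ‖q - p‖ := by simpa [dist_eq_norm] using hqR
  calc ⟪x - p, q - p⟫ ≤ ‖x - p‖ * ‖q - p‖ := real_inner_le_norm _ _
    _ ≤ 1 / 2 * ‖q - p‖ ^ 2 := by nlinarith [norm_nonneg (q - p)]

end Voronoi

theorem stmt5_general {n : ℕ} (P : Set (E n)) (hP : IsDiscretePointSet P) (p : E n)
    (hin : p ∈ interior (convexHull ℝ P)) :
    IsPolytope (voronoiCell P p) := by
  obtain ⟨c, hc, F, hFP, hFfin, hdir⟩ :=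
    exists_finite_subset_inner_ge_of_mem_interior_convexHull hin
  have hbdd := isBounded_biInter_halfSpace hc hFfin hdir
  obtain ⟨R, hR⟩ := (isBounded_iff_subset_closedBall p).1 hbdd
  have hV : voronoiCell P p = ⋂ q ∈ F ∪ (P ∩ closedBall p (2 * R)), halfSpace p q :=
    voronoiCell_eq_biInter_halfSpace (union_subset hFP inter_subset_left) subset_union_right
      ((biInter_subset_biInter_left subset_union_left).trans hR)
  rw [hV]
  exact ⟨(hFfin.union (hP _ isBounded_closedBall)).isPolyhedron_biInter_halfSpace p,
    hbdd.subset (biInter_subset_biInter_left subset_union_left)⟩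

theorem stmt5 {n : ℕ} (P : Set (E n)) (hP : IsDiscretePointSet P) (p : E n) (hp : p ∈ P)
    (hin : p ∈ interior (convexHull ℝ P)) :
    IsPolytope (voronoiCell P p) :=
  stmt5_general P hP p hin
end
end

section
/- Let P ⊆ ℝⁿ be a discrete point set and p ∈ P. If the Voronoi cell V(p) is a polytope, then p lies in the interior of conv(P). -/
open scoped RealInnerProductSpace
open Set

noncomputable section

/-- `P` is discrete: every bounded set contains only finitely many points of `P`. -/
def IsDiscrete' {n : ℕ} (P : Set (E n)) : Prop :=
  ∀ B : Set (E n), Bornology.IsBounded B → (P ∩ B).Finite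

/-! If `p ∈ P` were not interior to `conv P`, a supporting hyperplane of `conv P` at `p` would give
a direction `u ≠ 0` with `⟪q - p, u⟫ ≤ 0` for every `q ∈ P`. Walking from `p` along `u` then moves
away from every `q` at least as fast as from `p`, so the whole ray `p + t • u`, `t ≥ 0`, lies in
the Voronoi cell of `p`, which therefore is unbounded. -/

section Separation

variable {F : Type*} [NormedAddCommGroup F] [InnerProductSpace ℝ F]

theorem Convex.exists_inner_sub_nonpos_of_interior_nonempty {C : Set F} [CompleteSpace F]
    (hC : Convex ℝ C) {p : F} (hpi : p ∉ interior C) (hint : (interior C).Nonempty) :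
    ∃ u : F, u ≠ 0 ∧ ∀ x ∈ C, ⟪x - p, u⟫ ≤ 0 := by
  obtain ⟨f, hf0, hf⟩ := geometric_hahn_banach_of_nonempty_interior_point hC hpi hint
  set u := (InnerProductSpace.toDual ℝ F).symm f
  have hu : ∀ x, ⟪u, x⟫ = f x := fun x => InnerProductSpace.toDual_symm_apply
  refine ⟨u, by simpa [u] using hf0, fun x hx => ?_⟩
  rw [real_inner_comm, inner_sub_right, hu, hu]
  linarith [hf x hx]

theorem Convex.exists_inner_sub_eq_zero_of_interior_eq_empty [FiniteDimensional ℝ F]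
    {C : Set F} (hC : Convex ℝ C) {p : F} (hp : p ∈ C) (hint : interior C = ∅) :
    ∃ u : F, u ≠ 0 ∧ ∀ x ∈ C, ⟪x - p, u⟫ = 0 := by
  have hspan : affineSpan ℝ C ≠ ⊤ := fun h =>
    (hC.interior_nonempty_iff_affineSpan_eq_top.2 h).ne_empty hint
  have hdir : (affineSpan ℝ C).direction ≠ ⊤ := fun h =>
    hspan ((AffineSubspace.direction_eq_top_iff_of_nonempty ⟨p, mem_affineSpan ℝ hp⟩).1 h)
  obtain ⟨u, hu, hu0⟩ := Submodule.exists_mem_ne_zero_of_ne_bot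
    (Submodule.orthogonal_eq_bot_iff.not.2 hdir)
  exact ⟨u, hu0, fun x hx => hu _ (AffineSubspace.vsub_mem_direction
    (mem_affineSpan ℝ hx) (mem_affineSpan ℝ hp))⟩

theorem Convex.exists_inner_sub_nonpos_of_notMem_interior [FiniteDimensional ℝ F]
    {C : Set F} (hC : Convex ℝ C) {p : F} (hp : p ∈ C) (hpi : p ∉ interior C) :
    ∃ u : F, u ≠ 0 ∧ ∀ x ∈ C, ⟪x - p, u⟫ ≤ 0 := by
  rcases (interior C).eq_empty_or_nonempty with hint | hint
  · obtain ⟨u, hu0, hu⟩ := hC.exists_inner_sub_eq_zero_of_interior_eq_empty hp hint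
    exact ⟨u, hu0, fun x hx => (hu x hx).le⟩
  · exact hC.exists_inner_sub_nonpos_of_interior_nonempty hpi hint

end Separation

theorem eq_zero_of_isBounded_of_forall_add_smul_mem {F : Type*} [NormedAddCommGroup F]
    [NormedSpace ℝ F] {S : Set F} (hS : Bornology.IsBounded S)
    {p u : F} (hu : ∀ t : ℝ, 0 ≤ t → p + t • u ∈ S) : u = 0 := by
  by_contra hu0
  obtain ⟨R, hR0, hR⟩ := hS.subset_closedBall_lt 0 p
  have hun : 0 < ‖u‖ := norm_pos_iff.2 hu0
  set t := (R + 1) / ‖u‖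
  have ht : ‖t • u‖ = R + 1 := by
    rw [norm_smul, Real.norm_of_nonneg (by positivity), div_mul_cancel₀ _ hun.ne']
  have := hR (hu t (by positivity))
  rw [Metric.mem_closedBall, dist_eq_norm, add_sub_cancel_left, ht] at this
  linarith

theorem add_smul_mem_voronoiCell {n : ℕ} {P : Set (E n)} {p u : E n}
    (hu : ∀ q ∈ P, ⟪q - p, u⟫ ≤ 0) {t : ℝ} (ht : 0 ≤ t) : p + t • u ∈ voronoiCell P p := by
  intro q hq
  have hcross : 0 ≤ ⟪p - q, t • u⟫ := by
    rw [real_inner_smul_right, ← neg_sub, inner_neg_left]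
    exact mul_nonneg ht (neg_nonneg.2 (hu q hq))
  have hsq : dist (p + t • u) p ^ 2 ≤ dist (p + t • u) q ^ 2 := by
    rw [dist_eq_norm, dist_eq_norm, add_sub_cancel_left, add_sub_right_comm, norm_add_sq_real]
    linarith [sq_nonneg ‖p - q‖]
  exact pow_le_pow_iff_left₀ dist_nonneg dist_nonneg two_ne_zero |>.1 hsq

theorem stmt6_general {n : ℕ} (P : Set (E n)) (p : E n) (hp : p ∈ P)
    (hpoly : IsPolytope (voronoiCell P p)) :
    p ∈ interior (convexHull ℝ P) := by
  by_contra hpi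
  obtain ⟨u, hu0, hu⟩ := (convex_convexHull ℝ P).exists_inner_sub_nonpos_of_notMem_interior
    (subset_convexHull ℝ P hp) hpi
  exact hu0 <| eq_zero_of_isBounded_of_forall_add_smul_mem hpoly.2 fun _ ht =>
    add_smul_mem_voronoiCell (fun q hq => hu q (subset_convexHull ℝ P hq)) ht

theorem stmt6 {n : ℕ} (P : Set (E n)) (hP : IsDiscrete' P) (p : E n) (hp : p ∈ P)
    (hpoly : IsPolytope (voronoiCell P p)) :
    p ∈ interior (convexHull ℝ P) :=
  stmt6_general P p hp hpoly
end
end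

section
/- Let P ⊆ ℝⁿ be a discrete point set and p ∈ ∂P a boundary point (p ∈ P ∩ ∂conv(P)). If the Voronoi cell V(p) is a polyhedron, then the direction cone C(p) = cone(P − p) is finitely generated. -/
open scoped RealInnerProductSpace
open Set

noncomputable section

/-- `P` is discrete: every bounded set contains only finitely many points of `P`. -/
def IsDiscretePts {n : ℕ} (P : Set (E n)) : Prop :=
  ∀ B : Set (E n), Bornology.IsBounded B → (P ∩ B).Finite

/-!
Translate `p` to the origin and replace each `w ∈ P - p` by the normal `2 w / ‖w‖²` of the
bisector of `0` and `w`; call the resulting set `S`. The translated Voronoi cell is the polar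
`S°` and the direction cone is the cone over `S`. Discreteness leaves only finitely many points
of `S` outside any ball around `0`, so `{0} ∪ S` is compact, hence so is `conv ({0} ∪ S)`, which
by the bipolar theorem is `S°°`. On the other hand `S°` is a polyhedron `{x | ⟪x, yᵢ⟫ ≤ βᵢ}`
containing a ball around `0`, so `βᵢ > 0` unless `yᵢ = 0`, and `S° = Z°` for the finite set
`Z = {βᵢ⁻¹ yᵢ}`. Thus `conv ({0} ∪ S) = conv ({0} ∪ Z)`, and `S` and `Z` span the same cone.
-/

open Metric

lemma isCompact_convexHull {F : Type*} [NormedAddCommGroup F] [NormedSpace ℝ F]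
    [FiniteDimensional ℝ F] {X : Set F} (hX : IsCompact X) : IsCompact (convexHull ℝ X) := by
  let combo (k : ℕ) (wv : (Fin k → ℝ) × (Fin k → F)) : F := ∑ i, wv.1 i • wv.2 i
  let K (k : ℕ) := combo k '' (stdSimplex ℝ (Fin k) ×ˢ univ.pi fun _ => X)
  -- Carathéodory: `finrank + 1` points of `X` suffice
  have hK : convexHull ℝ X = ⋃ k ∈ Iic (Module.finrank ℝ F + 1), K k := by
    refine Subset.antisymm (fun x hx => ?_) (iUnion₂_subset fun k _ => ?_)
    · obtain ⟨ι, _, z, w, hzX, hind, hw0, hw1, rfl⟩ := eq_pos_convex_span_of_mem_convexHull hx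
      let e := Fintype.equivFin ι
      have hcard : Fintype.card ι ≤ Module.finrank ℝ F + 1 :=
        hind.card_le_finrank_succ.trans (Nat.succ_le_succ (Submodule.finrank_le _))
      refine mem_biUnion (x := Fintype.card ι) hcard ⟨(w ∘ e.symm, z ∘ e.symm), ⟨⟨?_, ?_⟩, ?_⟩, ?_⟩
      · exact fun j => (hw0 _).le
      · simpa [combo] using (e.symm.sum_comp w).trans hw1
      · exact fun j _ => hzX (mem_range_self _)
      · exact e.symm.sum_comp fun i => w i • z i
    · rintro _ ⟨⟨w, v⟩, ⟨⟨hw0, hw1⟩, hv⟩, rfl⟩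
      exact mem_convexHull_of_exists_fintype w v hw0 hw1 (fun i => hv i (mem_univ i)) rfl
  rw [hK]
  refine (finite_Iic _).isCompact_biUnion fun k _ => ?_
  exact ((isCompact_stdSimplex ℝ _).prod (isCompact_univ_pi fun _ => hX)).image
    (continuous_finsetSum _ fun i _ =>
      ((continuous_apply i).comp continuous_fst).smul ((continuous_apply i).comp continuous_snd))

lemma isCompact_insert_of_finite_diff_ball {X : Type*} [MetricSpace X] [ProperSpace X]
    {T : Set X} (c : X) (hT : ∀ r > 0, (T \ ball c r).Finite) : IsCompact (insert c T) := by
  have hclosed : insert c T = ⋂ r > (0 : ℝ), closedBall c r ∪ (T \ ball c r) := by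
    ext x
    simp only [mem_insert_iff, mem_iInter, mem_union, mem_sdiff, mem_closedBall, mem_ball, not_lt]
    refine ⟨?_, fun h => ?_⟩
    · rintro (rfl | hx) r hr
      · exact Or.inl (dist_self x ▸ hr.le)
      · exact (le_or_gt (dist x c) r).imp id fun h => ⟨hx, h.le⟩
    · by_contra! hx
      have hpos : 0 < dist x c := dist_pos.mpr hx.1
      rcases h _ (half_pos hpos) with h' | h'
      · linarith
      · exact hx.2 h'.1
  refine Metric.isCompact_of_isClosed_isBounded ?_ ?_
  · rw [hclosed]
    exact isClosed_biInter fun r hr => isClosed_closedBall.union (hT r hr).isClosed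
  · refine (isBounded_closedBall (x := c) (r := 1)).union (hT 1 one_pos).isBounded |>.subset ?_
    rw [hclosed]
    exact iInter₂_subset (1 : ℝ) one_pos

section InnerProductSpace

variable {F : Type*} [NormedAddCommGroup F] [InnerProductSpace ℝ F]

def innerPolar (A : Set F) : Set F := {x | ∀ a ∈ A, ⟪a, x⟫ ≤ 1}

lemma innerPolar_insert_zero (A : Set F) : innerPolar (insert 0 A) = innerPolar A := by
  simp [innerPolar]

lemma innerPolar_convexHull (A : Set F) : innerPolar (convexHull ℝ A) = innerPolar A := by
  refine Subset.antisymm (fun x hx a ha => hx a (subset_convexHull ℝ A ha)) fun x hx => ?_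
  have hconv : Convex ℝ {a : F | ⟪a, x⟫ ≤ 1} :=
    convex_halfSpace_le ⟨fun a b => inner_add_left a b x, fun c a => real_inner_smul_left a x c⟩ 1
  exact fun a ha => convexHull_min hx hconv ha

lemma innerPolar_innerPolar [CompleteSpace F] {K : Set F} (hK : IsClosed K) (hconv : Convex ℝ K)
    (h0 : (0 : F) ∈ K) : innerPolar (innerPolar K) = K := by
  refine Subset.antisymm (fun s hs => ?_) fun a ha x hx => real_inner_comm a x ▸ hx a ha
  by_contra hsK
  obtain ⟨f, u, hfK, hfs⟩ := geometric_hahn_banach_closed_point hconv hK hsK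
  have hu : 0 < u := by simpa using hfK 0 h0
  set v := (InnerProductSpace.toDual ℝ F).symm f
  have hv : u⁻¹ • v ∈ innerPolar K := fun a ha => by
    rw [real_inner_smul_right, real_inner_comm, InnerProductSpace.toDual_symm_apply,
      inv_mul_le_iff₀ hu, mul_one]
    exact (hfK a ha).le
  have hvs := hs _ hv
  rw [real_inner_smul_left, InnerProductSpace.toDual_symm_apply, inv_mul_le_iff₀ hu,
    mul_one] at hvs
  linarith

lemma closedBall_subset_innerPolar {A : Set F} {R : ℝ} (hR : 0 < R) (hA : A ⊆ closedBall 0 R) :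
    closedBall 0 R⁻¹ ⊆ innerPolar A := fun x hx a ha => by
  have ha' : ‖a‖ ≤ R := by simpa using hA ha
  have hx' : ‖x‖ ≤ R⁻¹ := by simpa using hx
  calc ⟪a, x⟫ ≤ ‖a‖ * ‖x‖ := real_inner_le_norm a x
    _ ≤ R * R⁻¹ := mul_le_mul ha' hx' (norm_nonneg x) hR.le
    _ = 1 := mul_inv_cancel₀ hR.ne'

lemma iInter_halfSpace_eq_innerPolar {ι : Type*} (y : ι → F) (β : ι → ℝ) {r : ℝ} (hr : 0 < r)
    (hball : closedBall 0 r ⊆ ⋂ i, {x | ⟪x, y i⟫ ≤ β i}) :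
    ⋂ i, {x | ⟪x, y i⟫ ≤ β i} = innerPolar (range fun i => (β i)⁻¹ • y i) := by
  ext x
  simp only [innerPolar, mem_iInter, mem_ofPred_eq, forall_mem_range]
  refine forall_congr' fun i => ?_
  rcases eq_or_ne (y i) 0 with hy | hy
  · have h0 := mem_iInter.mp (hball (mem_closedBall_self hr.le)) i
    simp_all
  · have hyn : 0 < ‖y i‖ := norm_pos_iff.mpr hy
    have hmem : (r / ‖y i‖) • y i ∈ closedBall (0 : F) r := by
      rw [mem_closedBall_zero_iff, norm_smul, Real.norm_of_nonneg (by positivity),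
        div_mul_cancel₀ r hyn.ne']
    have hβpos : 0 < β i := by
      have h := mem_iInter.mp (hball hmem) i
      rw [mem_ofPred_eq, real_inner_smul_left, real_inner_self_eq_norm_sq] at h
      exact lt_of_lt_of_le (by positivity) h
    rw [real_inner_smul_left, real_inner_comm, inv_mul_le_iff₀ hβpos, mul_one]

lemma PointedCone.hull_convexHull_insert_zero (A : Set F) :
    PointedCone.hull ℝ (convexHull ℝ (insert 0 A)) = PointedCone.hull ℝ A :=
  le_antisymm
    (Submodule.span_le.mpr <| convexHull_min
      (insert_subset (Submodule.zero_mem _) Submodule.subset_span) (PointedCone.convex _))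
    (Submodule.span_mono <| (subset_insert 0 A).trans (subset_convexHull ℝ _))

lemma PointedCone.hull_eq_of_innerPolar_eq [CompleteSpace F] {S T : Set F}
    (hS : IsClosed (convexHull ℝ (insert 0 S))) (hT : IsClosed (convexHull ℝ (insert 0 T)))
    (h : innerPolar S = innerPolar T) : PointedCone.hull ℝ S = PointedCone.hull ℝ T := by
  have bipolar {A : Set F} (hA : IsClosed (convexHull ℝ (insert 0 A))) :
      innerPolar (innerPolar A) = convexHull ℝ (insert 0 A) := by
    rw [← innerPolar_insert_zero A, ← innerPolar_convexHull (insert 0 A),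
      innerPolar_innerPolar hA (convex_convexHull ℝ _) (subset_convexHull ℝ _ (mem_insert 0 A))]
  rw [← hull_convexHull_insert_zero S, ← hull_convexHull_insert_zero T, ← bipolar hS,
    ← bipolar hT, h]

/-- The normal vector of the bisector of `0` and `w`, scaled so that the bisector is
`{x | ⟪bisectorNormal w, x⟫ = 1}`; note that `bisectorNormal 0 = 0` since `2 / 0 = 0`. -/
def bisectorNormal (w : F) : F :=
  (2 / ‖w‖ ^ 2) • w

lemma norm_bisectorNormal (w : F) : ‖bisectorNormal w‖ = 2 / ‖w‖ := by
  rcases eq_or_ne w 0 with rfl | hw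
  · simp [bisectorNormal]
  · rw [bisectorNormal, norm_smul, Real.norm_of_nonneg (by positivity)]
    field_simp [norm_ne_zero_iff.mpr hw]

lemma norm_le_norm_sub_iff (x w : F) : ‖x‖ ≤ ‖x - w‖ ↔ ⟪bisectorNormal w, x⟫ ≤ 1 := by
  rw [← sq_le_sq₀ (norm_nonneg _) (norm_nonneg _), norm_sub_sq_real, bisectorNormal,
    real_inner_smul_left, real_inner_comm]
  rcases eq_or_ne w 0 with rfl | hw
  · simp
  · have : 0 < ‖w‖ ^ 2 := by positivity
    rw [div_mul_eq_mul_div, div_le_one this]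
    constructor <;> intro h <;> linarith

lemma PointedCone.hull_image_bisectorNormal (W : Set F) :
    PointedCone.hull ℝ (bisectorNormal '' W) = PointedCone.hull ℝ W := by
  refine le_antisymm (Submodule.span_le.mpr ?_) (Submodule.span_le.mpr fun w hw => ?_)
  · rintro _ ⟨w, hw, rfl⟩
    exact PointedCone.smul_mem _ (by positivity) (Submodule.subset_span hw)
  · have hw' : (‖w‖ ^ 2 / 2) • bisectorNormal w = w := by
      rcases eq_or_ne w 0 with rfl | h
      · simp [bisectorNormal]
      · rw [bisectorNormal, smul_smul, div_mul_div_comm, mul_comm, div_self (by positivity),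
          one_smul]
    rw [← hw']
    exact PointedCone.smul_mem _ (by positivity) (Submodule.subset_span (mem_image_of_mem _ hw))

lemma finite_image_bisectorNormal_diff_ball {W : Set F} (hW : ∀ R, (W ∩ closedBall 0 R).Finite)
    {r : ℝ} (hr : 0 < r) : (bisectorNormal '' W \ ball 0 r).Finite := by
  refine ((hW (2 / r)).image bisectorNormal).subset ?_
  rintro _ ⟨⟨w, hw, rfl⟩, hwr⟩
  rw [mem_ball_zero_iff, not_lt, norm_bisectorNormal] at hwr
  have hw0 : 0 < ‖w‖ := by
    by_contra! h
    rw [le_antisymm h (norm_nonneg w), div_zero] at hwr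
    linarith
  refine mem_image_of_mem _ ⟨hw, ?_⟩
  rw [mem_closedBall_zero_iff, le_div_iff₀ hr]
  rw [le_div_iff₀ hw0] at hwr
  linarith

end InnerProductSpace

section Voronoi

variable {n : ℕ}

lemma coneHull_eq_hull (M : Set (E n)) : coneHull M = PointedCone.hull ℝ M := by
  ext x
  rw [SetLike.mem_coe, Submodule.mem_span_set']
  constructor
  · rintro ⟨k, v, c, hv, hc, rfl⟩
    exact ⟨k, fun i => ⟨c i, hc i⟩, fun i => ⟨v i, hv i⟩, rfl⟩
  · rintro ⟨k, c, v, rfl⟩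
    exact ⟨k, fun i => v i, fun i => c i, fun i => (v i).2, fun i => (c i).2, rfl⟩

lemma IsPolyhedron.preimage_add {S : Set (E n)} (hS : IsPolyhedron S) (p : E n) :
    IsPolyhedron ((· + p) ⁻¹' S) := by
  obtain ⟨k, y, α, rfl⟩ := hS
  refine ⟨k, y, fun i => α i - ⟪p, y i⟫, ?_⟩
  ext x
  simp only [mem_preimage, mem_iInter, mem_ofPred_eq, inner_add_left, le_sub_iff_add_le]

lemma IsDiscretePts.finite_image_sub_inter_closedBall {P : Set (E n)} (hP : IsDiscretePts P)
    (p : E n) (R : ℝ) : ((· - p) '' P ∩ closedBall 0 R).Finite := by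
  refine ((hP _ (isBounded_closedBall (x := p) (r := R))).image (· - p)).subset ?_
  rintro _ ⟨⟨q, hq, rfl⟩, hqR⟩
  exact mem_image_of_mem _ ⟨hq, by simpa [dist_eq_norm] using hqR⟩

lemma preimage_add_voronoiCell (P : Set (E n)) (p : E n) :
    (· + p) ⁻¹' voronoiCell P p = innerPolar (bisectorNormal '' ((· - p) '' P)) := by
  ext x
  simp only [voronoiCell, innerPolar, mem_preimage, mem_ofPred_eq, forall_mem_image,
    dist_eq_norm, ← norm_le_norm_sub_iff]
  refine forall₂_congr fun q _ => ?_
  rw [add_sub_cancel_right, sub_sub_eq_add_sub]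

end Voronoi

theorem stmt11_general {n : ℕ} (P : Set (E n)) (hP : IsDiscretePts P) (p : E n)
    (hpoly : IsPolyhedron (voronoiCell P p)) :
    FinitelyGeneratedCone (dirCone P p) := by
  set S := bisectorNormal '' ((· - p) '' P)
  have hS : IsCompact (insert 0 S) := isCompact_insert_of_finite_diff_ball 0 fun _ hr =>
    finite_image_bisectorNormal_diff_ball (hP.finite_image_sub_inter_closedBall p) hr
  obtain ⟨R, hR, hSR⟩ := (hS.isBounded.subset (subset_insert 0 S)).subset_closedBall_lt 0 0
  obtain ⟨k, y, β, hcell⟩ := hpoly.preimage_add p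
  rw [preimage_add_voronoiCell] at hcell
  have hpolar := iInter_halfSpace_eq_innerPolar y β (inv_pos.mpr hR)
    (hcell ▸ closedBall_subset_innerPolar hR hSR)
  refine ⟨k, fun i => (β i)⁻¹ • y i, ?_⟩
  rw [dirCone, coneHull_eq_hull, coneHull_eq_hull, ← PointedCone.hull_image_bisectorNormal]
  congr 1
  exact PointedCone.hull_eq_of_innerPolar_eq (isCompact_convexHull hS).isClosed
    (((finite_range _).insert 0).isCompact_convexHull ℝ).isClosed (hcell.trans hpolar)

theorem stmt11 {n : ℕ} (P : Set (E n)) (hP : IsDiscretePts P) (p : E n) (hp : p ∈ P)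
    (hbd : p ∈ frontier (convexHull ℝ P))
    (hpoly : IsPolyhedron (voronoiCell P p)) :
    FinitelyGeneratedCone (dirCone P p) :=
  stmt11_general P hP p hpoly
end
end

section
/- Let P ⊆ ℝⁿ be a discrete point set, p ∈ P, and suppose C(p) = cone(p₁ − p, ..., p_k − p) for finitely many p₁,...,p_k ∈ P, and C(p) ≠ ℝⁿ. Let H = ∩ᵢ H_p⁻(pᵢ) where H_p⁻(q) = {x : ⟨x − p, q − p⟩ ≤ ½‖q − p‖²}. Then the set H ∩ (C(p) + p) is compact. -/
open scoped RealInnerProductSpace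
open Set

noncomputable section

/-!
After translating by `p`, the set is `p + {c ∈ C | ⟪c, wᵢ⟫ ≤ ‖wᵢ‖² / 2 for all i}`, where
`wᵢ = vᵢ - p` and `C = cone(w)`. A finitely generated cone is closed: a linear relation among the
generators lets one drop a generator, which reduces to linearly independent generators, whose cone
is a linear image of the closed orthant. A nonzero `c ∈ C` has `⟪c, wᵢ⟫ > 0` for some `i`, because
`‖c‖² = ∑ λᵢ ⟪c, wᵢ⟫` for nonnegative `λᵢ`; by compactness of the unit sphere of `C` this is
uniform, `ε ‖c‖ ≤ ∑ max 0 ⟪c, wᵢ⟫`, so the inequalities `⟪c, wᵢ⟫ ≤ ‖wᵢ‖² / 2` bound `‖c‖`.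
-/

lemma exists_sub_smul_nonneg_eq_zero {ι 𝕜 : Type*} [Fintype ι] [Field 𝕜] [LinearOrder 𝕜]
    [IsStrictOrderedRing 𝕜] {c g : ι → 𝕜} (hc : 0 ≤ c) (hg : ∃ i, 0 < g i) :
    ∃ t : 𝕜, 0 ≤ c - t • g ∧ ∃ j, (c - t • g) j = 0 := by
  classical
  obtain ⟨j, hj, hmin⟩ := Finset.exists_min_image {i | 0 < g i} (fun i => c i / g i)
    (by simpa [Finset.Nonempty] using hg)
  have hgj : 0 < g j := (Finset.mem_filter.mp hj).2
  have ht : 0 ≤ c j / g j := div_nonneg (hc j) hgj.le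
  refine ⟨c j / g j, fun i => ?_, j, ?_⟩
  · rw [Pi.zero_apply, Pi.sub_apply, Pi.smul_apply, smul_eq_mul, sub_nonneg]
    rcases lt_or_ge 0 (g i) with hgi | hgi
    · exact (le_div_iff₀ hgi).mp (hmin i (by simpa using hgi))
    · exact (mul_nonpos_of_nonneg_of_nonpos ht hgi).trans (hc i)
  · simp [hgj.ne']

section coneHull

variable {n : ℕ}

lemma smul_mem_coneHull {M : Set (E n)} {t : ℝ} (ht : 0 ≤ t) {x : E n} (hx : x ∈ coneHull M) :
    t • x ∈ coneHull M := by
  obtain ⟨m, u, c, hu, hc, rfl⟩ := hx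
  refine ⟨m, u, t • c, hu, fun i => mul_nonneg ht (hc i), ?_⟩
  simp [Finset.smul_sum, smul_smul]

lemma coneHull_mono {M N : Set (E n)} (h : M ⊆ N) : coneHull M ⊆ coneHull N := by
  rintro x ⟨m, u, c, hu, hc, rfl⟩
  exact ⟨m, u, c, fun i => h (hu i), hc, rfl⟩

lemma inner_nonpos_of_mem_coneHull {M : Set (E n)} {x y : E n} (hy : ∀ m ∈ M, ⟪y, m⟫ ≤ 0)
    (hx : x ∈ coneHull M) : ⟪y, x⟫ ≤ 0 := by
  obtain ⟨m, u, c, hu, hc, rfl⟩ := hx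
  rw [inner_sum]
  exact Finset.sum_nonpos fun i _ => by
    rw [real_inner_smul_right]; exact mul_nonpos_of_nonneg_of_nonpos (hc i) (hy _ (hu i))

lemma exists_pos_inner_of_mem_coneHull {M : Set (E n)} {x : E n} (hx : x ∈ coneHull M)
    (hx0 : x ≠ 0) : ∃ m ∈ M, 0 < ⟪x, m⟫ := by
  by_contra! h
  exact hx0 (real_inner_self_nonpos.mp (inner_nonpos_of_mem_coneHull h hx))

lemma coneHull_range_eq_image {k : ℕ} (w : Fin k → E n) :
    coneHull (range w) = Fintype.linearCombination ℝ w '' Ici 0 := by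
  classical
  ext x
  simp only [mem_image, mem_Ici, Fintype.linearCombination_apply]
  constructor
  · rintro ⟨m, u, c, hu, hc, rfl⟩
    choose ι hι using hu
    refine ⟨fun i => ∑ j with ι j = i, c j, fun i => Finset.sum_nonneg fun j _ => hc j, ?_⟩
    simp_rw [Finset.sum_smul]
    rw [← Finset.sum_fiberwise Finset.univ ι fun j => c j • u j]
    refine Finset.sum_congr rfl fun i _ => Finset.sum_congr rfl fun j hj => ?_
    rw [← hι j, (Finset.mem_filter.mp hj).2]
  · rintro ⟨c, hc, rfl⟩
    exact ⟨k, w, c, fun i => ⟨i, rfl⟩, hc, rfl⟩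

lemma isClosed_coneHull_range_of_linearIndependent {k : ℕ} {w : Fin k → E n}
    (hw : LinearIndependent ℝ w) : IsClosed (coneHull (range w)) := by
  rw [coneHull_range_eq_image]
  refine (LinearMap.isClosedEmbedding_of_injective ?_).isClosedMap _ isClosed_Ici
  exact LinearMap.ker_eq_bot.mpr hw.fintypeLinearCombination_injective

lemma coneHull_range_eq_iUnion_succAbove {m : ℕ} {w : Fin (m + 1) → E n}
    (hw : ¬ LinearIndependent ℝ w) :
    coneHull (range w) = ⋃ j : Fin (m + 1), coneHull (range (w ∘ j.succAbove)) := by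
  refine Subset.antisymm ?_ (iUnion_subset fun j => coneHull_mono (range_comp_subset_range _ _))
  obtain ⟨g, hg, i, hi⟩ := Fintype.not_linearIndependent_iff.mp hw
  obtain ⟨g, hg, hpos⟩ : ∃ g : Fin (m + 1) → ℝ, ∑ i, g i • w i = 0 ∧ ∃ i, 0 < g i := by
    rcases hi.lt_or_gt with hneg | hpos
    · exact ⟨-g, by simp [Finset.sum_neg_distrib, hg], i, by simpa using hneg⟩
    · exact ⟨g, hg, i, hpos⟩
  rw [coneHull_range_eq_image]
  rintro _ ⟨c, hc, rfl⟩
  obtain ⟨t, hct, j, hj⟩ := exists_sub_smul_nonneg_eq_zero hc hpos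
  have hsum : Fintype.linearCombination ℝ w (c - t • g) = Fintype.linearCombination ℝ w c := by
    rw [map_sub, map_smul, sub_eq_self, Fintype.linearCombination_apply, hg, smul_zero]
  refine mem_iUnion.mpr ⟨j, ?_⟩
  rw [← hsum, coneHull_range_eq_image]
  refine ⟨(c - t • g) ∘ j.succAbove, fun i => hct _, ?_⟩
  simp only [Fintype.linearCombination_apply, Fin.sum_univ_succAbove _ j, hj, zero_smul, zero_add]
  rfl

lemma isClosed_coneHull_range {k : ℕ} (w : Fin k → E n) : IsClosed (coneHull (range w)) := by
  induction k with
  | zero => exact isClosed_coneHull_range_of_linearIndependent linearIndependent_empty_type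
  | succ m ih =>
    by_cases hw : LinearIndependent ℝ w
    · exact isClosed_coneHull_range_of_linearIndependent hw
    · rw [coneHull_range_eq_iUnion_succAbove hw]
      exact isClosed_iUnion_of_finite fun j => ih _

lemma exists_pos_mul_norm_le_sum_inner {k : ℕ} (w : Fin k → E n) :
    ∃ ε > 0, ∀ c ∈ coneHull (range w), ε * ‖c‖ ≤ ∑ i, max 0 ⟪c, w i⟫ := by
  set f : E n → ℝ := fun c => ∑ i, max 0 ⟪c, w i⟫
  have hf_smul : ∀ {t : ℝ}, 0 ≤ t → ∀ c, f (t • c) = t * f c := fun ht c => by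
    simp only [f, Finset.mul_sum, real_inner_smul_left, mul_max_of_nonneg _ _ ht, mul_zero]
  have hf_pos : ∀ u ∈ Metric.sphere 0 1 ∩ coneHull (range w), 0 < f u := by
    rintro u ⟨hu1, huC⟩
    obtain ⟨_, ⟨i, rfl⟩, hi⟩ :=
      exists_pos_inner_of_mem_coneHull huC (ne_zero_of_mem_unit_sphere ⟨u, hu1⟩)
    exact Finset.sum_pos' (fun i _ => le_max_left _ _)
      ⟨i, Finset.mem_univ _, lt_max_of_lt_right hi⟩
  obtain ⟨ε, hε, hεf⟩ := ((isCompact_sphere 0 1).inter_right (isClosed_coneHull_range w))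
    |>.exists_forall_le' (f := f) (by fun_prop) hf_pos
  refine ⟨ε, hε, fun c hc => ?_⟩
  rcases eq_or_ne c 0 with rfl | hc0
  · simp
  have hnorm : 0 < ‖c‖ := norm_pos_iff.mpr hc0
  have hu := hεf (‖c‖⁻¹ • c)
    ⟨by simp [norm_smul, hnorm.ne'], smul_mem_coneHull (inv_nonneg.mpr hnorm.le) hc⟩
  rw [hf_smul (inv_nonneg.mpr hnorm.le), inv_mul_eq_div, le_div_iff₀ hnorm] at hu
  linarith

lemma isCompact_coneHull_inter {k : ℕ} (w : Fin k → E n) (b : Fin k → ℝ) :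
    IsCompact (coneHull (range w) ∩ {c | ∀ i, ⟪c, w i⟫ ≤ b i}) := by
  have hclosed : IsClosed {c : E n | ∀ i, ⟪c, w i⟫ ≤ b i} := by
    simp only [ofPred_forall]
    exact isClosed_iInter fun i => isClosed_le (by fun_prop) continuous_const
  refine Metric.isCompact_of_isClosed_isBounded ((isClosed_coneHull_range w).inter hclosed) ?_
  obtain ⟨ε, hε, hεw⟩ := exists_pos_mul_norm_le_sum_inner w
  refine (Metric.isBounded_closedBall (x := 0) (r := (∑ i, max 0 (b i)) / ε)).subset ?_
  rintro c ⟨hcC, hcb⟩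
  rw [mem_closedBall_zero_iff, le_div_iff₀ hε, mul_comm]
  exact (hεw c hcC).trans (Finset.sum_le_sum fun i _ => max_le_max le_rfl (hcb i))

end coneHull

theorem stmt16_general {n : ℕ} (P : Set (E n)) (p : E n)
    (k : ℕ) (v : Fin k → E n)
    (hC : dirCone P p = coneHull (Set.range fun i => v i - p)) :
    IsCompact ((⋂ i, halfSpace p (v i)) ∩ ((fun x => x + p) '' dirCone P p)) := by
  rw [hC, inter_comm, ← image_inter_preimage]
  refine IsCompact.image ?_ (continuous_add_const p)
  convert isCompact_coneHull_inter (fun i => v i - p) (fun i => 1 / 2 * ‖v i - p‖ ^ 2) using 2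
  ext c
  simp [halfSpace]

theorem stmt16 {n : ℕ} (P : Set (E n)) (hP : IsDiscretePointSet P) (p : E n) (hp : p ∈ P)
    (k : ℕ) (v : Fin k → E n) (hv : ∀ i, v i ∈ P)
    (hC : dirCone P p = coneHull (Set.range fun i => v i - p))
    (hne : dirCone P p ≠ Set.univ) :
    IsCompact ((⋂ i, halfSpace p (v i)) ∩ ((fun x => x + p) '' dirCone P p)) :=
  stmt16_general P p k v hC
end
end

section
/- Let P ⊆ ℝⁿ be a discrete point set and p ∈ P such that p ∈ interior(conv({p₁,...,p_k})) for finitely many points p₁,...,p_k ∈ P. Then, with m = max{½‖pᵢ − p‖² : i = 1,...,k}, the Voronoi cell V(p) is contained in the bounded set p + m·C, where C is the polar set {x : ⟨x, pᵢ − p⟩ ≤ 1 for i = 1,...,k}; in particular V(p) is bounded. -/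
/-!
If a ball `B(p, ε)` lies in the convex hull of the `pᵢ`, then a half-space
`{w | ⟪y, w - p⟫ ≤ c}` containing every `pᵢ` contains that ball, which forces `ε ‖y‖ ≤ c`.
For `x` in the Voronoi cell, `y = x - p` satisfies `⟪y, pᵢ - p⟫ ≤ ½‖pᵢ - p‖² ≤ m`, since `x` is
at least as close to `p` as to `pᵢ`; hence `x - p ∈ m • C`, and `C` is bounded by `1 / ε`.
-/

open scoped RealInnerProductSpace
open Set

noncomputable section

theorem voronoiCell_subset_halfSpace {n : ℕ} {P : Set (E n)} {p q : E n} (hq : q ∈ P) :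
    voronoiCell P p ⊆ halfSpace p q := by
  intro x hx
  have hdist : ‖x - p‖ ^ 2 ≤ ‖x - q‖ ^ 2 := by
    have := hx q hq
    rw [dist_eq_norm, dist_eq_norm] at this
    gcongr
  have hexpand : ‖x - q‖ ^ 2 = ‖x - p‖ ^ 2 - 2 * ⟪x - p, q - p⟫ + ‖q - p‖ ^ 2 := by
    rw [← norm_sub_sq_real, sub_sub_sub_cancel_right]
  simp only [halfSpace, mem_ofPred_eq]
  linarith

section InnerProductSpace

variable {F : Type*} [NormedAddCommGroup F] [InnerProductSpace ℝ F]

theorem exists_pos_mul_norm_le_of_mem_interior_convexHull {s : Set F} {p : F}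
    (hp : p ∈ interior (convexHull ℝ s)) :
    ∃ ε > 0, ∀ (y : F) (c : ℝ), (∀ w ∈ s, ⟪y, w - p⟫ ≤ c) → ε * ‖y‖ ≤ c := by
  obtain ⟨ε, hε, hball⟩ := Metric.mem_nhds_iff.1 (mem_interior_iff_mem_nhds.1 hp)
  refine ⟨ε / 2, half_pos hε, fun y c hy => ?_⟩
  have hhull : convexHull ℝ s ⊆ {w | ⟪y, w⟫ ≤ c + ⟪y, p⟫} := by
    refine convexHull_min (fun w hw => ?_) (convex_halfSpace_le (innerₛₗ ℝ y).isLinear _)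
    have := hy w hw
    rw [inner_sub_right] at this
    simp only [mem_ofPred_eq]
    linarith
  have hclosedBall : Metric.closedBall p (ε / 2) ⊆ {w | ⟪y, w⟫ ≤ c + ⟪y, p⟫} :=
    ((Metric.closedBall_subset_ball (half_lt_self hε)).trans hball).trans hhull
  rcases eq_or_ne y 0 with rfl | hy0
  · simpa using hclosedBall (Metric.mem_closedBall_self (half_pos hε).le)
  have hnorm : 0 < ‖y‖ := norm_pos_iff.2 hy0
  set w := p + (ε / 2 * ‖y‖⁻¹) • y
  have hw : w ∈ Metric.closedBall p (ε / 2) := by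
    rw [Metric.mem_closedBall, dist_eq_norm, add_sub_cancel_left, norm_smul, Real.norm_eq_abs,
      abs_of_pos (by positivity), inv_mul_cancel_right₀ hnorm.ne']
  have hinner : ⟪y, w⟫ = ⟪y, p⟫ + ε / 2 * ‖y‖ := by
    rw [inner_add_right, real_inner_smul_right, real_inner_self_eq_norm_sq]
    field_simp
  have := hclosedBall hw
  simp only [mem_ofPred_eq, hinner] at this
  linarith

theorem exists_inner_le_one_and_smul_eq {ι : Type*} (u : ι → F) {y : F} {m ε : ℝ}
    (hε : 0 < ε) (hnorm : ε * ‖y‖ ≤ m) (hinner : ∀ i, ⟪y, u i⟫ ≤ m) :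
    ∃ c, (∀ i, ⟪c, u i⟫ ≤ 1) ∧ m • c = y := by
  rcases lt_trichotomy m 0 with hm | rfl | hm
  · nlinarith [norm_nonneg y]
  · have : y = 0 := norm_le_zero_iff.1 (nonpos_of_mul_nonpos_right hnorm hε)
    exact ⟨0, by simp, by simp [this]⟩
  · refine ⟨m⁻¹ • y, fun i => ?_, smul_inv_smul₀ hm.ne' y⟩
    rw [real_inner_smul_left, inv_mul_le_one₀ hm]
    exact hinner i

end InnerProductSpace

theorem stmt17_general {n : ℕ} (P : Set (E n)) (p : E n)
    (k : ℕ) (v : Fin k → E n) (hv : ∀ i, v i ∈ P)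
    (hin : p ∈ interior (convexHull ℝ (Set.range v)))
    (m : ℝ) (hub : ∀ i, (1/2) * ‖v i - p‖^2 ≤ m) :
    voronoiCell P p ⊆ (fun x => p + m • x) '' {x : E n | ∀ i, (inner ℝ x (v i - p) : ℝ) ≤ 1} ∧
    Bornology.IsBounded ((fun x => p + m • x) '' {x : E n | ∀ i, (inner ℝ x (v i - p) : ℝ) ≤ 1}) ∧
    Bornology.IsBounded (voronoiCell P p) := by
  obtain ⟨ε, hε, hpolar⟩ := exists_pos_mul_norm_le_of_mem_interior_convexHull hin
  have hpolar' : ∀ (y : E n) c, (∀ i, ⟪y, v i - p⟫ ≤ c) → ε * ‖y‖ ≤ c :=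
    fun y c hy => hpolar y c (forall_mem_range.2 hy)
  set C : Set (E n) := {x : E n | ∀ i, (inner ℝ x (v i - p) : ℝ) ≤ 1}
  have hsub : voronoiCell P p ⊆ (fun x => p + m • x) '' C := by
    intro x hx
    have hcell : ∀ i, ⟪x - p, v i - p⟫ ≤ m := fun i =>
      (voronoiCell_subset_halfSpace (hv i) hx).trans (hub i)
    obtain ⟨c, hc, hmc⟩ := exists_inner_le_one_and_smul_eq (fun i => v i - p) hε
      (hpolar' _ _ hcell) hcell
    exact ⟨c, hc, by simp [hmc]⟩
  have hbounded : Bornology.IsBounded ((fun x => p + m • x) '' C) := by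
    refine ((LipschitzWith.const p).add (lipschitzWith_smul m)).isBounded_image ?_
    refine isBounded_iff_forall_norm_le.2 ⟨1 / ε, fun y hy => ?_⟩
    rw [le_div_iff₀ hε, mul_comm]
    exact hpolar' y 1 hy
  exact ⟨hsub, hbounded, hbounded.subset hsub⟩

theorem stmt17 {n : ℕ} (P : Set (E n)) (hP : IsDiscretePointSet P) (p : E n) (hp : p ∈ P)
    (k : ℕ) (v : Fin k → E n) (hv : ∀ i, v i ∈ P)
    (hin : p ∈ interior (convexHull ℝ (Set.range v)))
    (m : ℝ) (hub : ∀ i, (1/2) * ‖v i - p‖^2 ≤ m)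
    (hmem : ∃ i, m = (1/2) * ‖v i - p‖^2) :
    voronoiCell P p ⊆ (fun x => p + m • x) '' {x : E n | ∀ i, (inner ℝ x (v i - p) : ℝ) ≤ 1} ∧
    Bornology.IsBounded ((fun x => p + m • x) '' {x : E n | ∀ i, (inner ℝ x (v i - p) : ℝ) ≤ 1}) ∧
    Bornology.IsBounded (voronoiCell P p) :=
  stmt17_general P p k v hv hin m hub
end
end
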